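/- arXiv:2311.17712 — 5 statements merged into one kernel-verified Lean document; each statement's English description precedes it below -/
import Mathlib

section
/- Let A = (a_{i,j}) be an r×r symmetrizable generalized Cartan matrix. For any function v : [1,r] → ℤ there exists a unique tropical frieze f : [1,r]×ℤ → ℤ associated to A (i.e. satisfying f(i,m)+f(i,m+1) = [Σ_{j>i}(-a_{j,i})f(j,m) + Σ_{j<i}(-a_{j,i})f(j,m+1)]_+ for all (i,m)) with f(i,0) = v(i) for all i ∈ [1,r]. Hence evaluation on [1,r]×{0} gives a bijection between tropical friezes associated to A and ℤ^r. -/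
open Finset

/-- An `r × r` symmetrizable generalized Cartan matrix. -/
def IsSGCM {r : ℕ} (A : Matrix (Fin r) (Fin r) ℤ) : Prop :=
  (∀ i, A i i = 2) ∧ (∀ i j, i ≠ j → A i j ≤ 0) ∧
    ∃ D : Fin r → ℤ, (∀ i, 0 < D i) ∧ ∀ i j, D i * A i j = D j * A j i

/-- A cluster-additive function associated to `A`. -/
def ClusterAdditive {r : ℕ} (A : Matrix (Fin r) (Fin r) ℤ) (k : Fin r → ℤ → ℤ) : Prop :=
  ∀ (i : Fin r) (m : ℤ),
    k i m + k i (m + 1) =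
      (∑ j ∈ Finset.univ.filter (fun j => i < j), (-(A j i)) * max (k j m) 0) +
        ∑ j ∈ Finset.univ.filter (fun j => j < i), (-(A j i)) * max (k j (m + 1)) 0

/-- A tropical frieze associated to `A`. -/
def TropicalFrieze {r : ℕ} (A : Matrix (Fin r) (Fin r) ℤ) (f : Fin r → ℤ → ℤ) : Prop :=
  ∀ (i : Fin r) (m : ℤ),
    f i m + f i (m + 1) =
      max ((∑ j ∈ Finset.univ.filter (fun j => i < j), (-(A j i)) * f j m) +
        ∑ j ∈ Finset.univ.filter (fun j => j < i), (-(A j i)) * f j (m + 1)) 0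

/-!
Read column by column, the frieze relation between two consecutive columns `c = f(·, m)` and
`d = f(·, m + 1)` is a triangular system: row `i` determines `d i` from `c` and the `d j` with
`j < i`, and equally determines `c i` from `d` and the `c j` with `j > i`. Hence each column
determines the next one and the previous one, the passage to the next column is a permutation of
`ℤ^r`, and the frieze with slice `v` is `m ↦ σ^m v`.
-/

theorem WellFounded.existsUnique_forall_eq {ι β : Type*} [Nonempty β] {r : ι → ι → Prop}
    (hr : WellFounded r) (Φ : ι → (ι → β) → β)
    (hΦ : ∀ i d d', (∀ j, r j i → d j = d' j) → Φ i d = Φ i d') :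
    ∃! d : ι → β, ∀ i, d i = Φ i d := by
  classical
  let F : ∀ i, (∀ j, r j i → β) → β := fun i rec =>
    Φ i fun j => if h : r j i then rec j h else Classical.arbitrary β
  refine ⟨hr.fix F, fun i => ?_, fun d hd => funext fun i => ?_⟩
  · rw [hr.fix_eq F i]
    exact hΦ i _ _ fun j hj => by simp [hj]
  · induction i using hr.induction with
    | _ i ih => rw [hd i, hr.fix_eq F i]; exact hΦ i _ _ fun j hj => by simp [hj, ih j hj]

theorem Equiv.Perm.eq_zpow_apply_of_forall_succ {α : Type*} (σ : Equiv.Perm α) {x : ℤ → α}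
    (hx : ∀ m, x (m + 1) = σ (x m)) (m : ℤ) : x m = (σ ^ m) (x 0) := by
  induction m using Int.induction_on with
  | zero => simp
  | succ n ih => rw [hx, ih, add_comm, zpow_one_add, Equiv.Perm.mul_apply]
  | pred n ih =>
    rw [show σ ^ (-(n : ℤ) - 1) = σ⁻¹ * σ ^ (-(n : ℤ)) by group, Equiv.Perm.mul_apply, ← ih,
      Equiv.Perm.eq_inv_iff_eq, ← hx, sub_add_cancel]

theorem existsUnique_int_seq_of_existsUnique_rel {α : Type*} (R : α → α → Prop)
    (hright : ∀ a, ∃! b, R a b) (hleft : ∀ b, ∃! a, R a b) (v : α) :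
    ∃! x : ℤ → α, (∀ m, R (x m) (x (m + 1))) ∧ x 0 = v := by
  choose σ hσ hσ_unique using hright
  have hbij : Function.Bijective σ := by
    refine ⟨fun a a' h => (hleft (σ a)).unique (hσ a) (h ▸ hσ a'), fun b => ?_⟩
    obtain ⟨a, ha, -⟩ := hleft b
    exact ⟨a, (hσ_unique a b ha).symm⟩
  let e : Equiv.Perm α := Equiv.ofBijective σ hbij
  refine ⟨fun m => (e ^ m) v, ⟨fun m => ?_, by simp⟩, fun x ⟨hx, hx0⟩ => funext fun m => ?_⟩
  · simp only [add_comm m, zpow_one_add, Equiv.Perm.mul_apply]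
    exact hσ _
  · rw [← hx0]
    exact e.eq_zpow_apply_of_forall_succ (fun m => hσ_unique _ _ (hx m)) m

namespace TropicalFrieze

variable {r : ℕ} (A : Matrix (Fin r) (Fin r) ℤ)

def exchangeSum (c d : Fin r → ℤ) (i : Fin r) : ℤ :=
  (∑ j ∈ univ.filter (fun j => i < j), (-(A j i)) * c j) +
    ∑ j ∈ univ.filter (fun j => j < i), (-(A j i)) * d j

def IsStep (c d : Fin r → ℤ) : Prop :=
  ∀ i, c i + d i = max (exchangeSum A c d i) 0

theorem _root_.tropicalFrieze_iff_isStep (f : Fin r → ℤ → ℤ) :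
    TropicalFrieze A f ↔ ∀ m, IsStep A (fun i => f i m) (fun i => f i (m + 1)) :=
  forall_comm

theorem exchangeSum_congr_right {c d d' : Fin r → ℤ} {i : Fin r} (h : ∀ j, j < i → d j = d' j) :
    exchangeSum A c d i = exchangeSum A c d' i := by
  unfold exchangeSum
  congr 1
  exact sum_congr rfl fun j hj => by rw [h j (mem_filter.mp hj).2]

theorem exchangeSum_congr_left {c c' d : Fin r → ℤ} {i : Fin r} (h : ∀ j, i < j → c j = c' j) :
    exchangeSum A c d i = exchangeSum A c' d i := by
  unfold exchangeSum
  congr 1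
  exact sum_congr rfl fun j hj => by rw [h j (mem_filter.mp hj).2]

theorem existsUnique_isStep_right (c : Fin r → ℤ) : ∃! d, IsStep A c d := by
  have hstep : ∀ d, IsStep A c d ↔ ∀ i, d i = max (exchangeSum A c d i) 0 - c i :=
    fun d => forall_congr' fun i => by rw [eq_sub_iff_add_eq']
  simp only [hstep]
  exact wellFounded_lt.existsUnique_forall_eq _
    fun i d d' h => by rw [exchangeSum_congr_right A h]

theorem existsUnique_isStep_left (d : Fin r → ℤ) : ∃! c, IsStep A c d := by
  have hstep : ∀ c, IsStep A c d ↔ ∀ i, c i = max (exchangeSum A c d i) 0 - d i :=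
    fun c => forall_congr' fun i => by rw [eq_sub_iff_add_eq]
  simp only [hstep]
  exact wellFounded_gt.existsUnique_forall_eq _
    fun i c c' h => by rw [exchangeSum_congr_left A h]

end TropicalFrieze

theorem tropical_frieze_exists_unique_of_slice_general {r : ℕ} (A : Matrix (Fin r) (Fin r) ℤ)
    (v : Fin r → ℤ) :
    ∃! f : Fin r → ℤ → ℤ, TropicalFrieze A f ∧ ∀ i, f i 0 = v i := by
  have hcols := existsUnique_int_seq_of_existsUnique_rel (TropicalFrieze.IsStep A)
    (TropicalFrieze.existsUnique_isStep_right A) (TropicalFrieze.existsUnique_isStep_left A) v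
  refine (Equiv.piComm fun (_ : Fin r) (_ : ℤ) => ℤ).existsUnique_congr (fun f => ?_) |>.mpr hcols
  rw [tropicalFrieze_iff_isStep, funext_iff]
  rfl

/-- For any prescribed values on the slice `[1,r] × {0}` there is a unique tropical frieze
associated to a symmetrizable generalized Cartan matrix `A` taking these values;
hence evaluation at the `0`-th slice is a bijection `C_frieze(A) ≅ ℤ^r`. -/
theorem tropical_frieze_exists_unique_of_slice {r : ℕ} (A : Matrix (Fin r) (Fin r) ℤ)
    (hA : IsSGCM A) (v : Fin r → ℤ) :
    ∃! f : Fin r → ℤ → ℤ, TropicalFrieze A f ∧ ∀ i, f i 0 = v i :=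
  tropical_frieze_exists_unique_of_slice_general A v
end

section
/- Let A be an r×r symmetrizable generalized Cartan matrix and let ρ : ℚ(y_1,...,y_r)_{>0} → ℤ^max be a semifield homomorphism. Let {y(i,m)}_{(i,m)∈[1,r]×ℤ} be defined by y(i,0) = y_i and the recursion y(i,m)·y(i,m+1) = Π_{j=i+1}^r (1+y(j,m))^{-a_{j,i}} · Π_{j=1}^{i-1}(1+y(j,m+1))^{-a_{j,i}}. Then the map k : [1,r]×ℤ → ℤ defined by k(i,m) = ρ(y(i,m)) is a cluster-additive function associated to A. -/
/-!
Restricted to nonzero elements, `ρ` is a group homomorphism to `(ℤ, +)` sending `1 + y` to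
`max (ρ y) 0`. Every factor of the recursion is nonzero because the left-hand side is, so applying
`ρ` to it turns `Y i m * Y i (m + 1)` into `ρ (Y i m) + ρ (Y i (m + 1))` and each
`(1 + Y j m) ^ (-A j i)` into `-A j i * max (ρ (Y j m)) 0`, which is the cluster-additive relation.
-/

open Finset

namespace TropicalValuation

variable {S : Type*} [Semifield S] {ρ : S → ℤ}
  (hmul : ∀ a b : S, a ≠ 0 → b ≠ 0 → ρ (a * b) = ρ a + ρ b)
include hmul

theorem map_one : ρ 1 = 0 := by
  have h := hmul 1 1 one_ne_zero one_ne_zero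
  rw [one_mul] at h
  omega

theorem map_pow {x : S} (hx : x ≠ 0) (n : ℕ) : ρ (x ^ n) = n * ρ x := by
  induction n with
  | zero => simp [map_one hmul]
  | succ n ih =>
    rw [pow_succ, hmul _ _ (pow_ne_zero n hx) hx, ih]
    push_cast
    ring

theorem map_inv {x : S} (hx : x ≠ 0) : ρ x⁻¹ = -ρ x := by
  have h := hmul x⁻¹ x (inv_ne_zero hx) hx
  rw [inv_mul_cancel₀ hx, map_one hmul] at h
  omega

theorem map_zpow {x : S} (hx : x ≠ 0) (n : ℤ) : ρ (x ^ n) = n * ρ x := by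
  cases n with
  | ofNat n => simpa using map_pow hmul hx n
  | negSucc n =>
    rw [zpow_negSucc, map_inv hmul (pow_ne_zero _ hx), map_pow hmul hx, Int.negSucc_eq]
    push_cast
    ring

theorem map_prod {ι : Type*} (s : Finset ι) {g : ι → S} (hg : ∀ j ∈ s, g j ≠ 0) :
    ρ (∏ j ∈ s, g j) = ∑ j ∈ s, ρ (g j) := by
  induction s using Finset.cons_induction with
  | empty => simp [map_one hmul]
  | cons a s _ ih =>
    have hs : ∀ j ∈ s, g j ≠ 0 := fun j hj => hg j (mem_cons_of_mem hj)
    rw [prod_cons, sum_cons, hmul _ _ (hg a (mem_cons_self a s)) (prod_ne_zero_iff.mpr hs), ih hs]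

variable (hadd : ∀ a b : S, a ≠ 0 → b ≠ 0 → ρ (a + b) = max (ρ a) (ρ b))
include hadd

theorem map_one_add_zpow {x : S} (hx : x ≠ 0) {n : ℤ} (hxn : (1 + x) ^ n ≠ 0) :
    ρ ((1 + x) ^ n) = n * max (ρ x) 0 := by
  rcases eq_or_ne n 0 with rfl | hn
  · simp [map_one hmul]
  -- `1 + x` may vanish in a general semifield; only the factor `(1 + x) ^ n` is known to be nonzero.
  have h1x : 1 + x ≠ 0 := (zpow_ne_zero_iff hn).mp hxn
  rw [map_zpow hmul h1x, hadd 1 x one_ne_zero hx, map_one hmul, max_comm]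

theorem map_prod_one_add_zpow {ι : Type*} (s : Finset ι) {x : ι → S} (e : ι → ℤ)
    (hx : ∀ j ∈ s, x j ≠ 0) (hprod : ∏ j ∈ s, (1 + x j) ^ e j ≠ 0) :
    ρ (∏ j ∈ s, (1 + x j) ^ e j) = ∑ j ∈ s, e j * max (ρ (x j)) 0 := by
  have hfactor := prod_ne_zero_iff.mp hprod
  rw [map_prod hmul s hfactor]
  exact sum_congr rfl fun j hj => map_one_add_zpow hmul hadd (hx j hj) (hfactor j hj)

end TropicalValuation

open TropicalValuation in
theorem cluster_additive_of_semifield_hom_general {r : ℕ} (A : Matrix (Fin r) (Fin r) ℤ)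
    {S : Type*} [Semifield S]
    (Y : Fin r → ℤ → S) (hY0 : ∀ i m, Y i m ≠ 0)
    (hY : ∀ (i : Fin r) (m : ℤ), Y i m * Y i (m + 1) =
      (∏ j ∈ Finset.univ.filter (fun j => i < j), (1 + Y j m) ^ (-(A j i))) *
        ∏ j ∈ Finset.univ.filter (fun j => j < i), (1 + Y j (m + 1)) ^ (-(A j i)))
    (ρ : S → ℤ)
    (hmul : ∀ a b : S, a ≠ 0 → b ≠ 0 → ρ (a * b) = ρ a + ρ b)
    (hadd : ∀ a b : S, a ≠ 0 → b ≠ 0 → ρ (a + b) = max (ρ a) (ρ b)) :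
    ClusterAdditive A (fun i m => ρ (Y i m)) := by
  intro i m
  have hLHS := mul_ne_zero (hY0 i m) (hY0 i (m + 1))
  obtain ⟨hlater, hearlier⟩ := mul_ne_zero_iff.mp (hY i m ▸ hLHS)
  calc ρ (Y i m) + ρ (Y i (m + 1))
      = ρ (Y i m * Y i (m + 1)) := (hmul _ _ (hY0 i m) (hY0 i (m + 1))).symm
    _ = _ := by
      rw [hY, hmul _ _ hlater hearlier,
        map_prod_one_add_zpow hmul hadd _ _ (fun j _ => hY0 j m) hlater,
        map_prod_one_add_zpow hmul hadd _ _ (fun j _ => hY0 j (m + 1)) hearlier]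

/-- Tropicalizing the generic **Y**-frieze pattern gives a cluster-additive function:
if `S` is a (commutative) semifield (such as `ℚ(y)_{>0}`), `Y : [1,r] × ℤ → S` is a family of
nonzero elements satisfying the Y-exchange recursion, and `ρ` is a semifield homomorphism from
(the nonzero part of) `S` to the max-plus tropical integers `ℤ^max`, then
`(i, m) ↦ ρ (Y i m)` is a cluster-additive function for `A`. -/
theorem cluster_additive_of_semifield_hom {r : ℕ} (A : Matrix (Fin r) (Fin r) ℤ)
    (hA : IsSGCM A) {S : Type*} [Semifield S]
    (Y : Fin r → ℤ → S) (hY0 : ∀ i m, Y i m ≠ 0)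
    (hY : ∀ (i : Fin r) (m : ℤ), Y i m * Y i (m + 1) =
      (∏ j ∈ Finset.univ.filter (fun j => i < j), (1 + Y j m) ^ (-(A j i))) *
        ∏ j ∈ Finset.univ.filter (fun j => j < i), (1 + Y j (m + 1)) ^ (-(A j i)))
    (ρ : S → ℤ)
    (hmul : ∀ a b : S, a ≠ 0 → b ≠ 0 → ρ (a * b) = ρ a + ρ b)
    (hadd : ∀ a b : S, a ≠ 0 → b ≠ 0 → ρ (a + b) = max (ρ a) (ρ b)) :
    ClusterAdditive A (fun i m => ρ (Y i m)) :=
  cluster_additive_of_semifield_hom_general A Y hY0 hY ρ hmul hadd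
end

section
/- Let A be an r×r symmetrizable generalized Cartan matrix. For each (i,m) ∈ [1,r]×ℤ there is a unique cluster-additive function h_{(i,m)} associated to A (the cluster-hammock function) such that h_{(i,m)}(j,m) = -δ_{j,i} for all j ∈ [1,r], where δ_{j,i} is the Kronecker delta. -/
/-!
The defining relation between two consecutive slices `v = k(·, m)` and `w = k(·, m + 1)` is
triangular: in row `i` it involves `w` only at indices `j < i` and `v` only at indices `j > i`.
Solving it for `w` by increasing `i`, or for `v` by decreasing `i`, shows that each slice
determines the next and the previous one, i.e. the relation is the graph of a permutation `σ`
of `Fin r → ℤ`. A cluster-additive function is then the orbit `n ↦ σ ^ (n - m) v` of its slice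
at `m`.
-/

open Finset

theorem Equiv.Perm.apply_add_eq_zpow_apply {α : Type*} (σ : Equiv.Perm α) {f : ℤ → α}
    (hf : ∀ n, f (n + 1) = σ (f n)) (m d : ℤ) : f (m + d) = (σ ^ d) (f m) := by
  induction d using Int.induction_on with
  | zero => simp
  | succ d ih => rw [← add_assoc, hf, ih, add_comm, zpow_one_add, mul_apply]
  | pred d ih =>
    rw [σ.eq_symm_apply.mpr (hf _).symm, show m + (-d - 1) + 1 = m + -d by ring, ih,
      sub_eq_neg_add, zpow_add, zpow_neg_one, mul_apply, inv_def]

namespace ClusterAdditive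

variable {r : ℕ} (A : Matrix (Fin r) (Fin r) ℤ)

def IsNextSlice (v w : Fin r → ℤ) : Prop :=
  ∀ i : Fin r, v i + w i =
    (∑ j ∈ univ.filter (fun j => i < j), (-(A j i)) * max (v j) 0) +
      ∑ j ∈ univ.filter (fun j => j < i), (-(A j i)) * max (w j) 0

theorem iff_isNextSlice {k : Fin r → ℤ → ℤ} :
    ClusterAdditive A k ↔ ∀ m, IsNextSlice A (fun j => k j m) (fun j => k j (m + 1)) :=
  forall_comm

def nextSlice (v : Fin r → ℤ) (i : Fin r) : ℤ :=
  (∑ j ∈ univ.filter (fun j => i < j), (-(A j i)) * max (v j) 0) +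
    (∑ j ∈ (univ.filter (fun j => j < i)).attach, (-(A j.1 i)) * max (nextSlice v j.1) 0) - v i
termination_by i.1
decreasing_by exact (mem_filter.mp j.2).2

def prevSlice (w : Fin r → ℤ) (i : Fin r) : ℤ :=
  (∑ j ∈ (univ.filter (fun j => i < j)).attach, (-(A j.1 i)) * max (prevSlice w j.1) 0) +
    (∑ j ∈ univ.filter (fun j => j < i), (-(A j i)) * max (w j) 0) - w i
termination_by r - i.1
decreasing_by have : i < j.1 := (mem_filter.mp j.2).2; omega

theorem isNextSlice_nextSlice (v : Fin r → ℤ) : IsNextSlice A v (nextSlice A v) := by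
  intro i
  rw [nextSlice, sum_attach _ fun j => (-(A j i)) * max (nextSlice A v j) 0]
  ring

theorem isNextSlice_prevSlice (w : Fin r → ℤ) : IsNextSlice A (prevSlice A w) w := by
  intro i
  rw [prevSlice, sum_attach _ fun j => (-(A j i)) * max (prevSlice A w j) 0]
  ring

variable {A}

theorem IsNextSlice.eq_nextSlice {v w : Fin r → ℤ} (h : IsNextSlice A v w) :
    w = nextSlice A v := by
  funext i
  induction i using WellFoundedLT.induction with
  | _ i ih =>
    have hsum : ∑ j ∈ univ.filter (fun j => j < i), (-(A j i)) * max (w j) 0 =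
        ∑ j ∈ univ.filter (fun j => j < i), (-(A j i)) * max (nextSlice A v j) 0 :=
      sum_congr rfl fun j hj => by rw [ih j (mem_filter.mp hj).2]
    linarith [h i, isNextSlice_nextSlice A v i]

theorem IsNextSlice.eq_prevSlice {v w : Fin r → ℤ} (h : IsNextSlice A v w) :
    v = prevSlice A w := by
  funext i
  induction i using WellFoundedGT.induction with
  | _ i ih =>
    have hsum : ∑ j ∈ univ.filter (fun j => i < j), (-(A j i)) * max (v j) 0 =
        ∑ j ∈ univ.filter (fun j => i < j), (-(A j i)) * max (prevSlice A w j) 0 :=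
      sum_congr rfl fun j hj => by rw [ih j (mem_filter.mp hj).2]
    linarith [h i, isNextSlice_prevSlice A w i]

variable (A)

def sliceShift : Equiv.Perm (Fin r → ℤ) where
  toFun := nextSlice A
  invFun := prevSlice A
  left_inv v := (isNextSlice_nextSlice A v).eq_prevSlice.symm
  right_inv w := (isNextSlice_prevSlice A w).eq_nextSlice.symm

theorem isNextSlice_iff {v w : Fin r → ℤ} : IsNextSlice A v w ↔ w = sliceShift A v :=
  ⟨IsNextSlice.eq_nextSlice, fun h => h ▸ isNextSlice_nextSlice A v⟩

theorem iff_slice_eq_zpow {k : Fin r → ℤ → ℤ} (m : ℤ) :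
    ClusterAdditive A k ↔ ∀ n, (fun j => k j n) = (sliceShift A ^ (n - m)) (fun j => k j m) := by
  rw [iff_isNextSlice]
  simp_rw [isNextSlice_iff]
  refine ⟨fun h n => ?_, fun h n => ?_⟩
  · simpa using (sliceShift A).apply_add_eq_zpow_apply (f := fun n j => k j n) h m (n - m)
  · rw [h, h n, ← Equiv.Perm.mul_apply, ← zpow_one_add, add_sub_right_comm, add_comm]

end ClusterAdditive

theorem cluster_hammock_exists_unique_general {r : ℕ} (A : Matrix (Fin r) (Fin r) ℤ)
    (i : Fin r) (m : ℤ) :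
    ∃! h : Fin r → ℤ → ℤ, ClusterAdditive A h ∧
      ∀ j : Fin r, h j m = if j = i then -1 else 0 := by
  set v : Fin r → ℤ := fun j => if j = i then -1 else 0
  refine ⟨fun j n => (ClusterAdditive.sliceShift A ^ (n - m)) v j, ⟨?_, fun j => by simp [v]⟩, ?_⟩
  · rw [ClusterAdditive.iff_slice_eq_zpow A m]
    intro n
    simp
  · rintro k ⟨hk, hkm⟩
    have hkv : (fun j => k j m) = v := funext hkm
    rw [ClusterAdditive.iff_slice_eq_zpow A m, hkv] at hk
    funext j n
    exact congrFun (hk n) j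

/-- For every `(i, m)` there is a unique cluster-additive function `h_(i,m)` associated to `A`
(the cluster-hammock function) with `h_(i,m)(j, m) = -δ_{j,i}` for all `j`. -/
theorem cluster_hammock_exists_unique {r : ℕ} (A : Matrix (Fin r) (Fin r) ℤ)
    (hA : IsSGCM A) (i : Fin r) (m : ℤ) :
    ∃! h : Fin r → ℤ → ℤ, ClusterAdditive A h ∧
      ∀ j : Fin r, h j m = if j = i then -1 else 0 :=
  cluster_hammock_exists_unique_general A i m
end

section
/- Let A be the Cartan matrix of type A_2 (a_{11}=a_{22}=2, a_{12}=a_{21}=-1). Then every cluster-additive function k associated to A is periodic: k(i, m+5) is determined by the gliding symmetry, and concretely the map m ↦ (k(1,m), k(2,m)) ∈ ℤ^2 is periodic with period 5, i.e. k(i,m+5) = k(i,m) for all i ∈ {1,2} and m ∈ ℤ. -/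
open Finset

/-!
Reading the two rows of `k` alternately, `… , k 0 m, k 1 m, k 0 (m + 1), k 1 (m + 1), …`, turns
the two `A₂` relations into the single recurrence `x n + x (n + 2) = [x (n + 1)]₊`, the
tropicalization of the Lyness recurrence `x n * x (n + 2) = x (n + 1) + 1`. Like the latter it has
period `5`, as one sees by following the recurrence through five steps and splitting on the signs
that occur. Five steps of `m` are ten steps of the interleaved sequence.
-/

def IsTropicalLyness (x : ℤ → ℤ) : Prop :=
  ∀ n, x n + x (n + 2) = max (x (n + 1)) 0

theorem IsTropicalLyness.periodic {x : ℤ → ℤ} (hx : IsTropicalLyness x) :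
    Function.Periodic x 5 := by
  intro n
  have h0 := hx n
  have h1 := hx (n + 1)
  have h2 := hx (n + 2)
  have h3 := hx (n + 3)
  have h4 := hx (n + 4)
  norm_num [add_assoc] at h1 h2 h3 h4
  omega

def interleave (k : Fin 2 → ℤ → ℤ) (n : ℤ) : ℤ :=
  if Even n then k 0 (n / 2) else k 1 (n / 2)

theorem interleave_two_mul (k : Fin 2 → ℤ → ℤ) (m : ℤ) : interleave k (2 * m) = k 0 m := by
  simp [interleave]

theorem interleave_two_mul_add_one (k : Fin 2 → ℤ → ℤ) (m : ℤ) :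
    interleave k (2 * m + 1) = k 1 m := by
  rw [interleave, if_neg (Int.not_even_two_mul_add_one m)]
  congr 1
  omega

namespace ClusterAdditive

variable {k : Fin 2 → ℤ → ℤ}

theorem A2_row_zero (hk : ClusterAdditive !![2, -1; -1, 2] k) (m : ℤ) :
    k 0 m + k 0 (m + 1) = max (k 1 m) 0 := by
  simpa [Finset.sum_filter, Fin.sum_univ_two] using hk 0 m

theorem A2_row_one (hk : ClusterAdditive !![2, -1; -1, 2] k) (m : ℤ) :
    k 1 m + k 1 (m + 1) = max (k 0 (m + 1)) 0 := by
  simpa [Finset.sum_filter, Fin.sum_univ_two] using hk 1 m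

theorem isTropicalLyness_interleave (hk : ClusterAdditive !![2, -1; -1, 2] k) :
    IsTropicalLyness (interleave k) := by
  intro n
  obtain ⟨m, rfl | rfl⟩ := Int.even_or_odd' n
  · rw [show 2 * m + 2 = 2 * (m + 1) by ring, interleave_two_mul, interleave_two_mul,
      interleave_two_mul_add_one]
    exact hk.A2_row_zero m
  · rw [show 2 * m + 1 + 1 = 2 * (m + 1) by ring, show 2 * m + 1 + 2 = 2 * (m + 1) + 1 by ring,
      interleave_two_mul, interleave_two_mul_add_one, interleave_two_mul_add_one]
    exact hk.A2_row_one m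

end ClusterAdditive

/-- Every cluster-additive function associated to the Cartan matrix of type `A₂` is
periodic with period `5`. -/
theorem cluster_additive_A2_period_five (k : Fin 2 → ℤ → ℤ)
    (hk : ClusterAdditive !![2, -1; -1, 2] k) :
    ∀ (i : Fin 2) (m : ℤ), k i (m + 5) = k i m := by
  have hper : Function.Periodic (interleave k) (2 * 5) := by
    exact_mod_cast hk.isTropicalLyness_interleave.periodic.nat_mul 2
  refine Fin.forall_fin_two.2 ⟨fun m => ?_, fun m => ?_⟩
  · rw [← interleave_two_mul k, ← interleave_two_mul k, mul_add]
    exact hper (2 * m)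
  · rw [← interleave_two_mul_add_one k, ← interleave_two_mul_add_one k,
      show 2 * (m + 5) + 1 = 2 * m + 1 + 2 * 5 by ring]
    exact hper (2 * m + 1)
end

section
/- Let A be the Cartan matrix of type A_2. Then every tropical frieze f associated to A is periodic with period 5: f(i, m+5) = f(i,m) for all i ∈ {1,2}, m ∈ ℤ. -/
open Finset

/-- Every tropical frieze associated to the Cartan matrix of type `A₂` is
periodic with period `5`. -/
theorem tropical_frieze_A2_period_five (f : Fin 2 → ℤ → ℤ)
    (hf : TropicalFrieze !![2, -1; -1, 2] f) :
    ∀ (i : Fin 2) (m : ℤ), f i (m + 5) = f i m := by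
  have e1 : Finset.univ.filter (fun j => (0:Fin 2) < j) = {1} := by decide
  have e2 : Finset.univ.filter (fun j => j < (0:Fin 2)) = ∅ := by decide
  have e3 : Finset.univ.filter (fun j => (1:Fin 2) < j) = ∅ := by decide
  have e4 : Finset.univ.filter (fun j => j < (1:Fin 2)) = {0} := by decide
  have h0 : ∀ m : ℤ, f 0 m + f 0 (m + 1) = max (f 1 m) 0 := by
    intro m; have := hf 0 m
    rw [e1, e2] at this
    simpa using this
  have h1 : ∀ m : ℤ, f 1 m + f 1 (m + 1) = max (f 0 (m + 1)) 0 := by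
    intro m; have := hf 1 m
    rw [e3, e4] at this
    simpa using this
  intro i m
  have a0 := h0 m
  have a1 := h0 (m+1)
  have a2 := h0 (m+2)
  have a3 := h0 (m+3)
  have a4 := h0 (m+4)
  have b0 := h1 m
  have b1 := h1 (m+1)
  have b2 := h1 (m+2)
  have b3 := h1 (m+3)
  have b4 := h1 (m+4)
  simp only [show (m:ℤ)+1+1 = m+2 by ring, show (m:ℤ)+2+1 = m+3 by ring,
    show (m:ℤ)+3+1 = m+4 by ring, show (m:ℤ)+4+1 = m+5 by ring] at a1 a2 a3 b1 b2 b3 a4 b4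
  have p0 : f 0 (m+5) = f 0 m := by omega
  have p1 : f 1 (m+5) = f 1 m := by omega
  fin_cases i
  · exact p0
  · exact p1
end
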